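/- Let n be a nonnegative integer, let α, γ > -1 and let k > 0 be real with (k+1)α > -1 and (k+1)γ > -1. Then the Krein-like moment of the Jacobi Rakhmanov density satisfies ∫_{-1}^{1} (1−x)^{(k+1)α} (1+x)^{(k+1)γ} [P_n^{(α,γ)}(x)]² dx = [2^{(k+1)(α+γ)+1} Γ(α(k+1)+1) Γ(γ(k+1)+1) / Γ((k+1)(α+γ)+2)] · C(n+α, n)² · Σ_{j₁=0}^{n} Σ_{j₂=0}^{n} [((k+1)α+1)_{j₁+j₂} / ((k+1)(α+γ)+2)_{j₁+j₂}] · [(−n)_{j₁} (n+α+γ+1)_{j₁} (−n)_{j₂} (n+α+γ+1)_{j₂}] / [(α+1)_{j₁} (α+1)_{j₂} j₁! j₂!]. -/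

import Mathlib

open MeasureTheory Finset Real

/-- Pochhammer symbol `(a)_k = a (a+1) ⋯ (a+k-1)`. -/
noncomputable def poch (a : ℝ) (k : ℕ) : ℝ := ∏ i ∈ Finset.range k, (a + i)

/-- Generalized binomial coefficient `C(a, j) = (a-j+1)_j / j!`. -/
noncomputable def gbinom (a : ℝ) (j : ℕ) : ℝ := poch (a - j + 1) j / (j.factorial : ℝ)

/-- Generalized Laguerre polynomial `L_n^{(α)}`. -/
noncomputable def Lag (α : ℝ) (n : ℕ) (x : ℝ) : ℝ :=
  ∑ i ∈ Finset.range (n + 1),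
    ((-1 : ℝ) ^ i / (i.factorial : ℝ)) * gbinom ((n : ℝ) + α) (n - i) * x ^ i

/-- Physicists' Hermite polynomial `H_n`. -/
noncomputable def Herm (n : ℕ) (x : ℝ) : ℝ :=
  ∑ k ∈ Finset.range (n / 2 + 1),
    ((-1 : ℝ) ^ k * (n.factorial : ℝ) / ((k.factorial : ℝ) * ((n - 2 * k).factorial : ℝ))) *
      (2 * x) ^ (n - 2 * k)

/-- Jacobi polynomial `P_n^{(α,γ)}`. -/
noncomputable def Jac (α γ : ℝ) (n : ℕ) (x : ℝ) : ℝ :=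
  ∑ k ∈ Finset.range (n + 1),
    gbinom ((n : ℝ) + α) (n - k) * gbinom ((n : ℝ) + γ) k *
      ((x - 1) / 2) ^ k * ((x + 1) / 2) ^ (n - k)

/-- Terminating Lauricella function of type A. -/
noncomputable def lauricellaA {r : ℕ} (a : ℝ) (m : Fin r → ℕ) (c x : Fin r → ℝ) : ℝ :=
  ∑ j ∈ Fintype.piFinset (fun i => Finset.range (m i + 1)),
    poch a (∑ i, j i) *
      ∏ i, (poch (-(m i : ℝ)) (j i) / (poch (c i) (j i) * ((j i).factorial : ℝ)) * x i ^ (j i))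

/-- Terminating Gauss hypergeometric sum `₂F₁(-k, b; c; x)`. -/
noncomputable def hyp2F1 (k : ℕ) (b c x : ℝ) : ℝ :=
  ∑ j ∈ Finset.range (k + 1),
    poch (-(k : ℝ)) j * poch b j / (poch c j * (j.factorial : ℝ)) * x ^ j

/-- Terminating hypergeometric sum `₃F₂(-k, b₁, b₂; c₁, c₂; x)`. -/
noncomputable def hyp3F2 (k : ℕ) (b₁ b₂ c₁ c₂ x : ℝ) : ℝ :=
  ∑ j ∈ Finset.range (k + 1),
    poch (-(k : ℝ)) j * poch b₁ j * poch b₂ j /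
      (poch c₁ j * poch c₂ j * (j.factorial : ℝ)) * x ^ j

/-- Gauss hypergeometric series `₂F₁(a, b; c; x)` (a terminating series when `a` or `b`
is a nonpositive integer). -/
noncomputable def hypSum (a b c x : ℝ) : ℝ :=
  ∑' j : ℕ, poch a j * poch b j / (poch c j * (j.factorial : ℝ)) * x ^ j

/-- Terminating Appell function `F₂(a; -m₁, -m₂; c₁, c₂; x₁, x₂)`. -/
noncomputable def appellF2 (a : ℝ) (m₁ m₂ : ℕ) (c₁ c₂ x₁ x₂ : ℝ) : ℝ :=
  ∑ j₁ ∈ Finset.range (m₁ + 1), ∑ j₂ ∈ Finset.range (m₂ + 1),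
    poch a (j₁ + j₂) * poch (-(m₁ : ℝ)) j₁ * poch (-(m₂ : ℝ)) j₂ /
      (poch c₁ j₁ * poch c₂ j₂ * (j₁.factorial : ℝ) * (j₂.factorial : ℝ)) * x₁ ^ j₁ * x₂ ^ j₂

/-- `1/z!` with the convention that it vanishes for negative integers `z`. -/
noncomputable def invFacZ (z : ℤ) : ℝ := if 0 ≤ z then ((z.toNat.factorial : ℕ) : ℝ)⁻¹ else 0

/-- Pochhammer symbol extended to integer index via `(a)_k = Γ(a+k)/Γ(a)` for negative `k`. -/
noncomputable def pochZ (a : ℝ) (k : ℤ) : ℝ :=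
  if 0 ≤ k then poch a k.toNat else Real.Gamma (a + (k : ℝ)) / Real.Gamma a

/-! Expanding `((x + 1) / 2) ^ (n - k) = (1 + (x - 1) / 2) ^ (n - k)` binomially and collecting
powers with Chu–Vandermonde gives the hypergeometric form
`P_n^{(α,γ)}(x) = C(n+α, n) · ₂F₁(-n, n+α+γ+1; α+1; (1-x)/2)`.
Squaring it, every monomial `((1 - x) / 2) ^ m` integrates against `(1-x)^A (1+x)^B` to a
Beta integral, `2^{A+B+1} Γ(A+1) Γ(B+1) / Γ(A+B+2) · (A+1)_m / (A+B+2)_m`. -/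

lemma poch_succ (a : ℝ) (k : ℕ) : poch a (k + 1) = poch a k * (a + k) :=
  prod_range_succ _ k

lemma poch_add (a : ℝ) (s t : ℕ) : poch a (s + t) = poch a s * poch (a + s) t := by
  induction t with
  | zero => simp [poch]
  | succ t ih => rw [← add_assoc, poch_succ, ih, poch_succ]; push_cast; ring

lemma poch_pos {a : ℝ} (ha : 0 < a) (k : ℕ) : 0 < poch a k :=
  prod_pos fun _ _ => by positivity

lemma poch_eq_eval_ascPochhammer (a : ℝ) (k : ℕ) : poch a k = (ascPochhammer ℝ k).eval a := by
  induction k with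
  | zero => simp [poch]
  | succ k ih => simp [poch_succ, ascPochhammer_succ_right, ih]

lemma poch_neg_natCast (n j : ℕ) : poch (-(n : ℝ)) j = (-1) ^ j * n.descFactorial j := by
  rw [poch_eq_eval_ascPochhammer, ascPochhammer_eval_neg_eq_descPochhammer,
    descPochhammer_eval_eq_descFactorial]

lemma gbinom_eq_ringChoose (a : ℝ) (j : ℕ) : gbinom a j = Ring.choose a j := by
  have h := Ring.factorial_nsmul_multichoose_eq_ascPochhammer (a - j + 1) j
  rw [Polynomial.ascPochhammer_smeval_eq_eval] at h
  rw [Ring.choose, gbinom, poch_eq_eval_ascPochhammer, ← h, nsmul_eq_mul]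
  field_simp

lemma Real.Gamma_add_nat_eq_poch {a : ℝ} (ha : 0 < a) (m : ℕ) :
    Gamma (a + m) = poch a m * Gamma a := by
  induction m with
  | zero => simp [poch]
  | succ m ih =>
    rw [Nat.cast_succ, ← add_assoc, Gamma_add_one (by positivity), ih, poch_succ]; ring

lemma Ring.choose_add_eq_sum_range {R : Type*} [CommRing R] [BinomialRing R] (r s : R)
    (j : ℕ) :
    Ring.choose (r + s) j = ∑ k ∈ range (j + 1), Ring.choose r k * Ring.choose s (j - k) := by
  rw [Ring.add_choose_eq j (Commute.all r s),
    Nat.sum_antidiagonal_eq_sum_range_succ (fun a b => Ring.choose r a * Ring.choose s b)]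

lemma sum_ringChoose_mul_choose {R : Type*} [CommRing R] [BinomialRing R] (α c : R) {n j : ℕ}
    (hj : j ≤ n) :
    ∑ k ∈ range (j + 1),
        Ring.choose ((n : R) + α) (n - k) * Ring.choose c k * ((n - k).choose (j - k) : R)
      = Ring.choose ((n : R) + α) (n - j) * Ring.choose (c + α + j) j := by
  have hterm : ∀ k ∈ range (j + 1),
      Ring.choose ((n : R) + α) (n - k) * Ring.choose c k * ((n - k).choose (j - k) : R)
        = Ring.choose ((n : R) + α) (n - j) *
            (Ring.choose c k * Ring.choose (α + j) (j - k)) := by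
    intro k hk
    have hkj : k ≤ j := Nat.lt_succ_iff.mp (mem_range.mp hk)
    have h := Ring.choose_smul_choose ((n : R) + α) (show n - j ≤ n - k by omega)
    rw [nsmul_eq_mul, ← Nat.choose_symm (by omega), show n - k - (n - j) = j - k by omega,
      Nat.cast_sub hj, show (n : R) + α - (n - j) = α + j by ring] at h
    linear_combination Ring.choose c k * h
  rw [sum_congr rfl hterm, ← mul_sum, ← Ring.choose_add_eq_sum_range, add_assoc]

lemma Jac_eq_sum_gbinom_mul_pow (α γ : ℝ) (n : ℕ) (x : ℝ) :
    Jac α γ n x = ∑ j ∈ range (n + 1),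
      gbinom ((n : ℝ) + α) (n - j) * gbinom ((n : ℝ) + α + γ + j) j * ((x - 1) / 2) ^ j := by
  set t := (x - 1) / 2
  have hexpand : ∀ k ∈ range (n + 1),
      gbinom ((n : ℝ) + α) (n - k) * gbinom ((n : ℝ) + γ) k * t ^ k * ((x + 1) / 2) ^ (n - k)
        = ∑ i ∈ range (n + 1 - k), Ring.choose ((n : ℝ) + α) (n - k) *
            Ring.choose ((n : ℝ) + γ) k * ((n - k).choose i : ℝ) * t ^ (k + i) := by
    intro k hk
    rw [show (x + 1) / 2 = t + 1 by ring, add_pow, mul_sum,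
      show n + 1 - k = n - k + 1 by have := mem_range.mp hk; omega]
    refine sum_congr rfl fun i _ => ?_
    rw [gbinom_eq_ringChoose, gbinom_eq_ringChoose, pow_add]; ring
  have hcollect : ∀ j ∈ range (n + 1),
      gbinom ((n : ℝ) + α) (n - j) * gbinom ((n : ℝ) + α + γ + j) j * t ^ j
        = ∑ k ∈ range (j + 1),
            Ring.choose ((n : ℝ) + α) (n - k) * Ring.choose ((n : ℝ) + γ) k *
              ((n - k).choose (j - k) : ℝ) * t ^ (k + (j - k)) := by
    intro j hj
    have hjn : j ≤ n := Nat.lt_succ_iff.mp (mem_range.mp hj)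
    rw [sum_congr rfl fun k hk => by
        rw [Nat.add_sub_cancel' (Nat.lt_succ_iff.mp (mem_range.mp hk))],
      ← sum_mul, sum_ringChoose_mul_choose α _ hjn, add_right_comm (n : ℝ) γ α,
      gbinom_eq_ringChoose, gbinom_eq_ringChoose]
  rw [Jac, sum_congr rfl hexpand, sum_congr rfl hcollect]
  exact (sum_range_diag_flip (n + 1) fun k i => Ring.choose ((n : ℝ) + α) (n - k) *
    Ring.choose ((n : ℝ) + γ) k * ((n - k).choose i : ℝ) * t ^ (k + i)).symm

lemma neg_one_pow_mul_gbinom_mul_gbinom (α γ : ℝ) {n j : ℕ} (hα : poch (α + 1) n ≠ 0)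
    (hj : j ≤ n) :
    (-1) ^ j * (gbinom ((n : ℝ) + α) (n - j) * gbinom ((n : ℝ) + α + γ + j) j)
      = gbinom ((n : ℝ) + α) n *
        (poch (-(n : ℝ)) j * poch ((n : ℝ) + α + γ + 1) j /
          (poch (α + 1) j * j.factorial)) := by
  have hsplit : poch (α + 1) n = poch (α + 1) j * poch (α + j + 1) (n - j) := by
    rw [← Nat.add_sub_cancel' hj, poch_add, Nat.add_sub_cancel_left, add_right_comm]
  have hpj : poch (α + 1) j ≠ 0 := left_ne_zero_of_mul (hsplit ▸ hα)
  have hfac : ((n - j).factorial : ℝ) * n.descFactorial j = n.factorial := by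
    exact_mod_cast Nat.factorial_mul_descFactorial hj
  have hdesc : (n.descFactorial j : ℝ) ≠ 0 := by
    exact_mod_cast (Nat.descFactorial_eq_zero_iff_lt.not.mpr (not_lt.mpr hj))
  simp only [gbinom, poch_neg_natCast, Nat.cast_sub hj]
  rw [show (n : ℝ) + α - (n - j) + 1 = α + j + 1 by ring,
    show (n : ℝ) + α - n + 1 = α + 1 by ring,
    show (n : ℝ) + α + γ + j - j + 1 = n + α + γ + 1 by ring, hsplit, ← hfac]
  field_simp

lemma Jac_eq_gbinom_mul_hyp2F1 (α γ : ℝ) (n : ℕ) (hα : poch (α + 1) n ≠ 0) (x : ℝ) :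
    Jac α γ n x =
      gbinom ((n : ℝ) + α) n * hyp2F1 n ((n : ℝ) + α + γ + 1) (α + 1) ((1 - x) / 2) := by
  rw [Jac_eq_sum_gbinom_mul_pow, hyp2F1, mul_sum]
  refine sum_congr rfl fun j hj => ?_
  have h := neg_one_pow_mul_gbinom_mul_gbinom α γ hα (Nat.lt_succ_iff.mp (mem_range.mp hj))
  rw [show (x - 1) / 2 = -1 * ((1 - x) / 2) by ring, mul_pow]
  linear_combination ((1 - x) / 2) ^ j * h

lemma integral_rpow_mul_two_sub_rpow {A B : ℝ} (hA : -1 < A) (hB : -1 < B) :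
    ∫ u in (0 : ℝ)..2, u ^ B * (2 - u) ^ A =
      2 ^ (A + B + 1) * Gamma (A + 1) * Gamma (B + 1) / Gamma (A + B + 2) := by
  have hA' : 0 < ((A + 1 : ℝ) : ℂ).re := by simp; linarith
  have hB' : 0 < ((B + 1 : ℝ) : ℂ).re := by simp; linarith
  have hcomplex := Complex.betaIntegral_scaled ((B + 1 : ℝ) : ℂ) ((A + 1 : ℝ) : ℂ) two_pos
  have hGamma := Complex.Gamma_mul_Gamma_eq_betaIntegral hB' hA'
  have hreal : ∀ u ∈ Set.uIcc (0 : ℝ) 2,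
      (u : ℂ) ^ (((B + 1 : ℝ) : ℂ) - 1) *
          (((2 : ℝ) : ℂ) - u) ^ (((A + 1 : ℝ) : ℂ) - 1)
        = ((u ^ B * (2 - u) ^ A : ℝ) : ℂ) := by
    intro u hu
    rw [Set.uIcc_of_le zero_le_two] at hu
    push_cast
    rw [Complex.ofReal_cpow hu.1, Complex.ofReal_cpow (by linarith [hu.2])]
    push_cast; ring_nf
  have hsum : ((B + 1 : ℝ) : ℂ) + ((A + 1 : ℝ) : ℂ) = ((A + B + 2 : ℝ) : ℂ) := by
    push_cast; ring
  have hexp : ((B + 1 : ℝ) : ℂ) + ((A + 1 : ℝ) : ℂ) - 1 = ((A + B + 1 : ℝ) : ℂ) := by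
    push_cast; ring
  rw [intervalIntegral.integral_congr hreal, intervalIntegral.integral_ofReal, hexp,
    ← Complex.ofReal_cpow zero_le_two] at hcomplex
  rw [hsum, Complex.Gamma_ofReal, Complex.Gamma_ofReal, Complex.Gamma_ofReal] at hGamma
  have hpos : 0 < Gamma (A + B + 2) := Gamma_pos_of_pos (by linarith)
  rw [eq_div_iff hpos.ne']
  apply Complex.ofReal_injective
  push_cast
  rw [hcomplex]
  linear_combination (-(((2 : ℝ) ^ (A + B + 1) : ℝ) : ℂ)) * hGamma

lemma integral_Ioo_one_sub_rpow_mul_one_add_rpow {A B : ℝ} (hA : -1 < A) (hB : -1 < B) :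
    ∫ x in Set.Ioo (-1 : ℝ) 1, (1 - x) ^ A * (1 + x) ^ B =
      2 ^ (A + B + 1) * Gamma (A + 1) * Gamma (B + 1) / Gamma (A + B + 2) := by
  have hshift := intervalIntegral.integral_comp_sub_right
    (fun x : ℝ => (1 - x) ^ A * (1 + x) ^ B) 1 (a := 0) (b := 2)
  norm_num only at hshift
  rw [← integral_Ioc_eq_integral_Ioo, ← intervalIntegral.integral_of_le (by norm_num),
    ← hshift, ← integral_rpow_mul_two_sub_rpow hA hB]
  refine intervalIntegral.integral_congr fun u _ => ?_
  rw [show 1 - (u - 1) = 2 - u by ring, show 1 + (u - 1) = u by ring, mul_comm]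

lemma integral_Ioo_one_sub_rpow_mul_one_add_rpow_mul_pow {A B : ℝ} (hA : -1 < A) (hB : -1 < B)
    (m : ℕ) :
    ∫ x in Set.Ioo (-1 : ℝ) 1, (1 - x) ^ A * (1 + x) ^ B * ((1 - x) / 2) ^ m =
      2 ^ (A + B + 1) * Gamma (A + 1) * Gamma (B + 1) / Gamma (A + B + 2) *
        (poch (A + 1) m / poch (A + B + 2) m) := by
  have hAm : -1 < A + m := by linarith [m.cast_nonneg (α := ℝ)]
  have hpoint : ∀ x ∈ Set.Ioo (-1 : ℝ) 1, (1 - x) ^ A * (1 + x) ^ B * ((1 - x) / 2) ^ m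
      = (2 ^ m)⁻¹ * ((1 - x) ^ (A + m) * (1 + x) ^ B) := by
    intro x hx
    rw [rpow_add (by linarith [hx.2]), rpow_natCast, div_pow]
    ring
  rw [setIntegral_congr_fun measurableSet_Ioo hpoint, integral_const_mul,
    integral_Ioo_one_sub_rpow_mul_one_add_rpow hAm hB,
    show A + m + 1 = (A + 1) + m by ring, show A + m + B + 2 = (A + B + 2) + m by ring,
    show A + m + B + 1 = (A + B + 1) + m by ring, rpow_add two_pos, rpow_natCast,
    Gamma_add_nat_eq_poch (by linarith), Gamma_add_nat_eq_poch (by linarith)]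
  have := (poch_pos (show 0 < A + B + 2 by linarith) m).ne'
  have := (Gamma_pos_of_pos (show 0 < A + B + 2 by linarith)).ne'
  field_simp

lemma integrableOn_Ioo_one_sub_rpow_mul_one_add_rpow_mul_pow {A B : ℝ} (hA : -1 < A)
    (hB : -1 < B) (m : ℕ) :
    IntegrableOn (fun x => (1 - x) ^ A * (1 + x) ^ B * ((1 - x) / 2) ^ m)
      (Set.Ioo (-1 : ℝ) 1) := by
  -- a non-integrable function has Bochner integral `0`
  refine Integrable.of_integral_ne_zero (ne_of_gt ?_)
  rw [integral_Ioo_one_sub_rpow_mul_one_add_rpow_mul_pow hA hB]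
  have := poch_pos (show 0 < A + 1 by linarith) m
  have := poch_pos (show 0 < A + B + 2 by linarith) m
  have := Gamma_pos_of_pos (show 0 < A + 1 by linarith)
  have := Gamma_pos_of_pos (show 0 < B + 1 by linarith)
  have := Gamma_pos_of_pos (show 0 < A + B + 2 by linarith)
  positivity

lemma integral_mul_sq_sum_mul_pow {X : Type*} [MeasurableSpace X] {μ : Measure X}
    {w g : X → ℝ}
    (hint : ∀ m : ℕ, Integrable (fun x => w x * g x ^ m) μ) (s : Finset ℕ)
    (c : ℕ → ℝ) :
    ∫ x, w x * (∑ j ∈ s, c j * g x ^ j) ^ 2 ∂μ =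
      ∑ j₁ ∈ s, ∑ j₂ ∈ s, c j₁ * c j₂ * ∫ x, w x * g x ^ (j₁ + j₂) ∂μ := by
  have hexpand : ∀ x, w x * (∑ j ∈ s, c j * g x ^ j) ^ 2
      = ∑ j₁ ∈ s, ∑ j₂ ∈ s, c j₁ * c j₂ * (w x * g x ^ (j₁ + j₂)) := by
    intro x
    rw [sq, sum_mul_sum]
    simp only [mul_sum]
    exact sum_congr rfl fun _ _ => sum_congr rfl fun _ _ => by rw [pow_add]; ring
  simp only [hexpand]
  rw [integral_finsetSum _ fun j₁ _ => integrable_finsetSum _ fun j₂ _ =>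
    (hint (j₁ + j₂)).const_mul _]
  refine sum_congr rfl fun j₁ _ => ?_
  rw [integral_finsetSum _ fun j₂ _ => (hint (j₁ + j₂)).const_mul _]
  exact sum_congr rfl fun j₂ _ => integral_const_mul _ _

theorem jacobi_krein_moment_general (n : ℕ) (α γ k : ℝ) (hα : -1 < α)
    (hkα : -1 < (k + 1) * α) (hkγ : -1 < (k + 1) * γ) :
    ∫ x in Set.Ioo (-1 : ℝ) 1,
        (1 - x) ^ ((k + 1) * α) * (1 + x) ^ ((k + 1) * γ) * (Jac α γ n x) ^ 2 =
      ((2 : ℝ) ^ ((k + 1) * (α + γ) + 1) * Real.Gamma (α * (k + 1) + 1) *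
          Real.Gamma (γ * (k + 1) + 1) / Real.Gamma ((k + 1) * (α + γ) + 2)) *
        gbinom ((n : ℝ) + α) n ^ 2 *
        ∑ j₁ ∈ Finset.range (n + 1), ∑ j₂ ∈ Finset.range (n + 1),
          (poch ((k + 1) * α + 1) (j₁ + j₂) / poch ((k + 1) * (α + γ) + 2) (j₁ + j₂)) *
            (poch (-(n : ℝ)) j₁ * poch ((n : ℝ) + α + γ + 1) j₁ *
                poch (-(n : ℝ)) j₂ * poch ((n : ℝ) + α + γ + 1) j₂ /
              (poch (α + 1) j₁ * poch (α + 1) j₂ * (j₁.factorial : ℝ) * (j₂.factorial : ℝ))) := by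
  set A := (k + 1) * α
  set B := (k + 1) * γ
  set c : ℕ → ℝ := fun j =>
    poch (-(n : ℝ)) j * poch ((n : ℝ) + α + γ + 1) j / (poch (α + 1) j * j.factorial)
  have hJac : ∀ x, Jac α γ n x =
      ∑ j ∈ range (n + 1), gbinom ((n : ℝ) + α) n * c j * ((1 - x) / 2) ^ j := by
    intro x
    rw [Jac_eq_gbinom_mul_hyp2F1 α γ n (poch_pos (by linarith) n).ne', hyp2F1, mul_sum]
    simp only [c, mul_div_assoc, mul_assoc]
  simp only [hJac]
  rw [integral_mul_sq_sum_mul_pow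
    (integrableOn_Ioo_one_sub_rpow_mul_one_add_rpow_mul_pow hkα hkγ)]
  simp only [integral_Ioo_one_sub_rpow_mul_one_add_rpow_mul_pow hkα hkγ, mul_sum]
  rw [show α * (k + 1) = A by ring, show γ * (k + 1) = B by ring,
    show (k + 1) * (α + γ) = A + B by ring]
  refine sum_congr rfl fun j₁ _ => sum_congr rfl fun j₂ _ => ?_
  simp only [c]
  ring

/-- Krein-like moment of the Jacobi Rakhmanov density. -/
theorem jacobi_krein_moment (n : ℕ) (α γ k : ℝ) (hα : -1 < α) (hγ : -1 < γ) (hk : 0 < k)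
    (hkα : -1 < (k + 1) * α) (hkγ : -1 < (k + 1) * γ) :
    ∫ x in Set.Ioo (-1 : ℝ) 1,
        (1 - x) ^ ((k + 1) * α) * (1 + x) ^ ((k + 1) * γ) * (Jac α γ n x) ^ 2 =
      ((2 : ℝ) ^ ((k + 1) * (α + γ) + 1) * Real.Gamma (α * (k + 1) + 1) *
          Real.Gamma (γ * (k + 1) + 1) / Real.Gamma ((k + 1) * (α + γ) + 2)) *
        gbinom ((n : ℝ) + α) n ^ 2 *
        ∑ j₁ ∈ Finset.range (n + 1), ∑ j₂ ∈ Finset.range (n + 1),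
          (poch ((k + 1) * α + 1) (j₁ + j₂) / poch ((k + 1) * (α + γ) + 2) (j₁ + j₂)) *
            (poch (-(n : ℝ)) j₁ * poch ((n : ℝ) + α + γ + 1) j₁ *
                poch (-(n : ℝ)) j₂ * poch ((n : ℝ) + α + γ + 1) j₂ /
              (poch (α + 1) j₁ * poch (α + 1) j₂ * (j₁.factorial : ℝ) * (j₂.factorial : ℝ))) :=
  jacobi_krein_moment_general n α γ k hα hkα hkγ
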